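/- arXiv:2404.05579 — 4 statements merged into one kernel-verified Lean document; each statement's English description precedes it below -/
import Mathlib

section
/- Let 0 < σ₀ < σ₁, μ₀ < μ₁, priors φ₀, φ₁ > 0 with φ₀ + φ₁ = 1, and assume the discriminant condition φ₀/φ₁ ≥ (σ₀/σ₁)·exp(−(μ₀−μ₁)²/(2(σ₁²−σ₀²))). Let t₊ be the larger root of the first-order condition. If additionally φ₀/φ₁ > Φ((t₊−μ₁)/σ₁)/Φ((t₊−μ₀)/σ₀), then t₊ is a global minimizer of R(t) = φ₀Φ((μ₀−t)/σ₀) + φ₁Φ((t−μ₁)/σ₁) over t ∈ ℝ ∪ {±∞}. -/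
open ProbabilityTheory

/-- The standard normal cumulative distribution function Φ. -/
noncomputable def stdNormalCDF : ℝ → ℝ :=
  fun x => ProbabilityTheory.cdf (gaussianReal 0 1) x

/-!
`R'(t)` is `φ₁ N(μ₁, σ₁²)(t) - φ₀ N(μ₀, σ₀²)(t)`, whose sign is that of the log-ratio of the two
weighted densities: a quadratic in `t` with leading coefficient `(σ₁² - σ₀²)/(2σ₀²σ₁²) > 0` and,
by the discriminant condition, real roots `t₋ ≤ t₊`. So `R` increases up to `t₋`, decreases on
`[t₋, t₊]` and increases after `t₊`. Hence `R(t₊) ≤ R(+∞) = φ₁`, and the global minimum is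
`min (R(t₊), R(-∞) = φ₀)`; the hypothesis on the ratio of `Φ`-values is exactly `R(t₊) ≤ φ₀`.
-/

open MeasureTheory Set Filter Real
open scoped Topology NNReal

section StdNormal

lemma stdNormalCDF_eq_integral (x : ℝ) :
    stdNormalCDF x = ∫ t in Iic x, gaussianPDFReal 0 1 t := by
  rw [stdNormalCDF, cdf_eq_real, measureReal_def, gaussianReal_apply_eq_integral 0 one_ne_zero,
    ENNReal.toReal_ofReal]
  exact setIntegral_nonneg measurableSet_Iic fun t _ => gaussianPDFReal_nonneg 0 1 t

lemma continuous_gaussianPDFReal (μ : ℝ) (v : ℝ≥0) : Continuous (gaussianPDFReal μ v) := by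
  rw [gaussianPDFReal_def]; fun_prop

lemma gaussianPDFReal_zero_neg (v : ℝ≥0) (x : ℝ) :
    gaussianPDFReal 0 v (-x) = gaussianPDFReal 0 v x := by
  simp only [gaussianPDFReal, sub_zero, neg_sq]

lemma gaussianPDFReal_zero_one_eq (x : ℝ) :
    gaussianPDFReal 0 1 x = (√(2 * π))⁻¹ * exp (-x ^ 2 / 2) := by
  simp [gaussianPDFReal]

lemma stdNormalCDF_neg (x : ℝ) : stdNormalCDF (-x) = 1 - stdNormalCDF x := by
  have hint := integrable_gaussianPDFReal 0 1
  have htotal : stdNormalCDF x + ∫ t in Ioi x, gaussianPDFReal 0 1 t = 1 := by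
    rw [stdNormalCDF_eq_integral, intervalIntegral.integral_Iic_add_Ioi hint.integrableOn
      hint.integrableOn, integral_gaussianPDFReal_eq_one 0 one_ne_zero]
  have hreflect : stdNormalCDF (-x) = ∫ t in Ioi x, gaussianPDFReal 0 1 t := by
    have := integral_comp_neg_Iic (-x) (gaussianPDFReal 0 1)
    simp only [gaussianPDFReal_zero_neg, neg_neg] at this
    rw [stdNormalCDF_eq_integral, this]
  linarith

lemma hasDerivAt_stdNormalCDF (x : ℝ) :
    HasDerivAt stdNormalCDF (gaussianPDFReal 0 1 x) x := by
  have hint := integrable_gaussianPDFReal 0 1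
  have hFTC : ∀ y,
      stdNormalCDF y = stdNormalCDF 0 + ∫ t in (0 : ℝ)..y, gaussianPDFReal 0 1 t := by
    intro y
    rw [← intervalIntegral.integral_Iic_sub_Iic hint.integrableOn hint.integrableOn,
      ← stdNormalCDF_eq_integral, ← stdNormalCDF_eq_integral]
    ring
  refine HasDerivAt.congr_of_eventuallyEq ?_ (Eventually.of_forall hFTC)
  exact (intervalIntegral.integral_hasDerivAt_right hint.intervalIntegrable
    (continuous_gaussianPDFReal 0 1).stronglyMeasurable.stronglyMeasurableAtFilter
    (continuous_gaussianPDFReal 0 1).continuousAt).const_add _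

lemma tendsto_stdNormalCDF_atTop : Tendsto stdNormalCDF atTop (𝓝 1) :=
  tendsto_cdf_atTop _

lemma tendsto_stdNormalCDF_atBot : Tendsto stdNormalCDF atBot (𝓝 0) :=
  tendsto_cdf_atBot _

lemma stdNormalCDF_pos (x : ℝ) : 0 < stdNormalCDF x := by
  have hmono : StrictMono stdNormalCDF := strictMono_of_hasDerivAt_pos hasDerivAt_stdNormalCDF
    fun y => gaussianPDFReal_pos 0 1 y one_ne_zero
  exact (cdf_nonneg _ (x - 1)).trans_lt (hmono (by linarith))

lemma mul_gaussianPDFReal_sub_mul {a b : ℝ} (ha : 0 < a) (hb : 0 < b) (u v : ℝ) :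
    b * gaussianPDFReal 0 1 v - a * gaussianPDFReal 0 1 u
      = a * gaussianPDFReal 0 1 u * (exp (u ^ 2 / 2 - v ^ 2 / 2 - log (a / b)) - 1) := by
  have hexp : a * (exp (u ^ 2 / 2 - v ^ 2 / 2 - log (a / b)) * exp (-u ^ 2 / 2))
      = b * exp (-v ^ 2 / 2) := by
    rw [← exp_add, show u ^ 2 / 2 - v ^ 2 / 2 - log (a / b) + -u ^ 2 / 2
      = -v ^ 2 / 2 - log (a / b) by ring, exp_sub, exp_log (div_pos ha hb)]
    field_simp
  simp only [gaussianPDFReal_zero_one_eq]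
  linear_combination (-(√(2 * π))⁻¹) * hexp

end StdNormal

section DerivSign

variable {f : ℝ → ℝ} {a b : ℝ}

lemma monotoneOn_Iic_of_deriv_sign (hf : Differentiable ℝ f)
    (hsign : ∀ t, 0 ≤ deriv f t ↔ 0 ≤ (t - a) * (t - b)) (hab : a ≤ b) :
    MonotoneOn f (Iic a) := by
  refine monotoneOn_of_deriv_nonneg (convex_Iic a) hf.continuous.continuousOn
    hf.differentiableOn fun t ht => (hsign t).2 ?_
  rw [interior_Iic] at ht
  exact mul_nonneg_of_nonpos_of_nonpos (by linarith [mem_Iio.1 ht]) (by linarith [mem_Iio.1 ht])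

lemma monotoneOn_Ici_of_deriv_sign (hf : Differentiable ℝ f)
    (hsign : ∀ t, 0 ≤ deriv f t ↔ 0 ≤ (t - a) * (t - b)) (hab : a ≤ b) :
    MonotoneOn f (Ici b) := by
  refine monotoneOn_of_deriv_nonneg (convex_Ici b) hf.continuous.continuousOn
    hf.differentiableOn fun t ht => (hsign t).2 ?_
  rw [interior_Ici] at ht
  exact mul_nonneg (by linarith [mem_Ioi.1 ht]) (by linarith [mem_Ioi.1 ht])

lemma antitoneOn_Icc_of_deriv_sign (hf : Differentiable ℝ f)
    (hsign : ∀ t, 0 ≤ deriv f t ↔ 0 ≤ (t - a) * (t - b)) :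
    AntitoneOn f (Icc a b) := by
  refine antitoneOn_of_deriv_nonpos (convex_Icc a b) hf.continuous.continuousOn
    hf.differentiableOn fun t ht => ?_
  rw [interior_Icc] at ht
  have hneg : (t - a) * (t - b) < 0 :=
    mul_neg_of_pos_of_neg (by linarith [ht.1]) (by linarith [ht.2])
  by_contra! hpos
  exact hneg.not_ge ((hsign t).1 hpos.le)

lemma apply_le_of_deriv_sign {l : ℝ} (hf : Differentiable ℝ f)
    (hsign : ∀ t, 0 ≤ deriv f t ↔ 0 ≤ (t - a) * (t - b)) (hab : a ≤ b)
    (hbot : Tendsto f atBot (𝓝 l)) (hb : f b ≤ l) (t : ℝ) : f b ≤ f t := by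
  rcases le_or_gt a t with hat | hta
  · rcases le_or_gt t b with htb | hbt
    · exact antitoneOn_Icc_of_deriv_sign hf hsign ⟨hat, htb⟩ ⟨hab, le_rfl⟩ htb
    · exact monotoneOn_Ici_of_deriv_sign hf hsign hab self_mem_Ici hbt.le hbt.le
  · refine hb.trans (le_of_tendsto hbot (eventually_atBot.2 ⟨t, fun u hut => ?_⟩))
    exact monotoneOn_Iic_of_deriv_sign hf hsign hab (hut.trans hta.le) hta.le hut

end DerivSign

section ThresholdRisk

variable (μ₀ μ₁ σ₀ σ₁ φ₀ φ₁ : ℝ)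

noncomputable def thresholdRisk (t : ℝ) : ℝ :=
  φ₀ * stdNormalCDF ((μ₀ - t) / σ₀) + φ₁ * stdNormalCDF ((t - μ₁) / σ₁)

/-- The critical points of `thresholdRisk` are `criticalPoint … s` for the two square roots `s`
of the discriminant. -/
noncomputable def criticalPoint (s : ℝ) : ℝ :=
  (μ₀ * σ₁ ^ 2 - μ₁ * σ₀ ^ 2 + σ₀ * σ₁ * s) / (σ₁ ^ 2 - σ₀ ^ 2)

lemma hasDerivAt_thresholdRisk (t : ℝ) :
    HasDerivAt (thresholdRisk μ₀ μ₁ σ₀ σ₁ φ₀ φ₁)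
      (φ₁ / σ₁ * gaussianPDFReal 0 1 ((t - μ₁) / σ₁)
        - φ₀ / σ₀ * gaussianPDFReal 0 1 ((μ₀ - t) / σ₀)) t := by
  have h₀ : HasDerivAt (fun t : ℝ => (μ₀ - t) / σ₀) (-1 / σ₀) t := by
    simpa using ((hasDerivAt_id t).const_sub μ₀).div_const σ₀
  have h₁ : HasDerivAt (fun t : ℝ => (t - μ₁) / σ₁) (1 / σ₁) t :=
    ((hasDerivAt_id t).sub_const μ₁).div_const σ₁
  exact ((((hasDerivAt_stdNormalCDF _).comp t h₀).const_mul φ₀).add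
    (((hasDerivAt_stdNormalCDF _).comp t h₁).const_mul φ₁)).congr_deriv (by ring)

lemma tendsto_thresholdRisk_atTop (hσ₀ : 0 < σ₀) (hσ₁ : 0 < σ₁) :
    Tendsto (thresholdRisk μ₀ μ₁ σ₀ σ₁ φ₀ φ₁) atTop (𝓝 φ₁) := by
  have h₀ : Tendsto (fun t : ℝ => (μ₀ - t) / σ₀) atTop atBot :=
    (tendsto_atBot_add_const_left _ μ₀ tendsto_neg_atTop_atBot).atBot_div_const hσ₀
  have h₁ : Tendsto (fun t : ℝ => (t - μ₁) / σ₁) atTop atTop :=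
    (tendsto_atTop_add_const_right _ (-μ₁) tendsto_id).atTop_div_const hσ₁
  have h := (((tendsto_stdNormalCDF_atBot).comp h₀).const_mul φ₀).add
    (((tendsto_stdNormalCDF_atTop).comp h₁).const_mul φ₁)
  rwa [mul_zero, mul_one, zero_add] at h

lemma tendsto_thresholdRisk_atBot (hσ₀ : 0 < σ₀) (hσ₁ : 0 < σ₁) :
    Tendsto (thresholdRisk μ₀ μ₁ σ₀ σ₁ φ₀ φ₁) atBot (𝓝 φ₀) := by
  have h₀ : Tendsto (fun t : ℝ => (μ₀ - t) / σ₀) atBot atTop :=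
    (tendsto_atTop_add_const_left _ μ₀ tendsto_neg_atBot_atTop).atTop_div_const hσ₀
  have h₁ : Tendsto (fun t : ℝ => (t - μ₁) / σ₁) atBot atBot :=
    (tendsto_atBot_add_const_right _ (-μ₁) tendsto_id).atBot_div_const hσ₁
  have h := (((tendsto_stdNormalCDF_atTop).comp h₀).const_mul φ₀).add
    (((tendsto_stdNormalCDF_atBot).comp h₁).const_mul φ₁)
  rwa [mul_zero, mul_one, add_zero] at h

lemma thresholdRisk_le_iff (t : ℝ) :
    thresholdRisk μ₀ μ₁ σ₀ σ₁ φ₀ φ₁ t ≤ φ₀ ↔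
      φ₁ * stdNormalCDF ((t - μ₁) / σ₁) ≤ φ₀ * stdNormalCDF ((t - μ₀) / σ₀) := by
  rw [thresholdRisk, show (μ₀ - t) / σ₀ = -((t - μ₀) / σ₀) by ring, stdNormalCDF_neg]
  constructor <;> intro h <;> linarith

end ThresholdRisk

section Critical

variable {μ₀ μ₁ σ₀ σ₁ φ₀ φ₁ : ℝ}

lemma discriminant_nonneg (hσ₀ : 0 < σ₀) (hσ : σ₀ < σ₁) (hφ₀ : 0 < φ₀) (hφ₁ : 0 < φ₁)
    (hdisc : φ₀ / φ₁ ≥ (σ₀ / σ₁) * exp (-(μ₀ - μ₁) ^ 2 / (2 * (σ₁ ^ 2 - σ₀ ^ 2)))) :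
    0 ≤ (μ₀ - μ₁) ^ 2 + 2 * (σ₁ ^ 2 - σ₀ ^ 2) * log (φ₀ * σ₁ / (φ₁ * σ₀)) := by
  have hσ₁ : 0 < σ₁ := hσ₀.trans hσ
  have hΔ : 0 < 2 * (σ₁ ^ 2 - σ₀ ^ 2) := by nlinarith
  have hexp : exp (-(μ₀ - μ₁) ^ 2 / (2 * (σ₁ ^ 2 - σ₀ ^ 2))) ≤ φ₀ * σ₁ / (φ₁ * σ₀) := by
    rw [ge_iff_le, div_mul_eq_mul_div, div_le_div_iff₀ hσ₁ hφ₁] at hdisc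
    rw [le_div_iff₀ (by positivity)]
    linarith
  have hlog := (le_log_iff_exp_le (by positivity)).2 hexp
  rw [div_le_iff₀ hΔ] at hlog
  linarith

lemma sq_div_sub_sq_div_sub_eq_mul {L s : ℝ} (hσ₀ : σ₀ ≠ 0) (hσ₁ : σ₁ ≠ 0)
    (hσ : σ₁ ^ 2 - σ₀ ^ 2 ≠ 0) (hs : s ^ 2 = (μ₀ - μ₁) ^ 2 + 2 * (σ₁ ^ 2 - σ₀ ^ 2) * L) (t : ℝ) :
    ((μ₀ - t) / σ₀) ^ 2 / 2 - ((t - μ₁) / σ₁) ^ 2 / 2 - L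
      = (σ₁ ^ 2 - σ₀ ^ 2) * ((t - criticalPoint μ₀ μ₁ σ₀ σ₁ (-s))
          * (t - criticalPoint μ₀ μ₁ σ₀ σ₁ s)) / (2 * σ₀ ^ 2 * σ₁ ^ 2) := by
  have hL : L = (s ^ 2 - (μ₀ - μ₁) ^ 2) / (2 * (σ₁ ^ 2 - σ₀ ^ 2)) := by
    rw [eq_div_iff (by positivity), hs]; ring
  rw [hL, criticalPoint, criticalPoint]
  field_simp
  ring

lemma criticalPoint_neg_le (hσ₀ : 0 < σ₀) (hσ : σ₀ < σ₁) {s : ℝ} (hs : 0 ≤ s) :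
    criticalPoint μ₀ μ₁ σ₀ σ₁ (-s) ≤ criticalPoint μ₀ μ₁ σ₀ σ₁ s := by
  have hΔ : 0 < σ₁ ^ 2 - σ₀ ^ 2 := by nlinarith
  unfold criticalPoint
  gcongr
  · exact (mul_pos hσ₀ (hσ₀.trans hσ)).le
  · linarith

lemma deriv_thresholdRisk_nonneg_iff (hσ₀ : 0 < σ₀) (hσ : σ₀ < σ₁) (hφ₀ : 0 < φ₀)
    (hφ₁ : 0 < φ₁) {s : ℝ}
    (hs : s ^ 2 = (μ₀ - μ₁) ^ 2 + 2 * (σ₁ ^ 2 - σ₀ ^ 2) * log (φ₀ * σ₁ / (φ₁ * σ₀))) (t : ℝ) :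
    0 ≤ deriv (thresholdRisk μ₀ μ₁ σ₀ σ₁ φ₀ φ₁) t ↔
      0 ≤ (t - criticalPoint μ₀ μ₁ σ₀ σ₁ (-s)) * (t - criticalPoint μ₀ μ₁ σ₀ σ₁ s) := by
  have hσ₁ : 0 < σ₁ := hσ₀.trans hσ
  have hΔ : 0 < σ₁ ^ 2 - σ₀ ^ 2 := by nlinarith
  have hweights : φ₀ / σ₀ / (φ₁ / σ₁) = φ₀ * σ₁ / (φ₁ * σ₀) := by field_simp
  rw [(hasDerivAt_thresholdRisk μ₀ μ₁ σ₀ σ₁ φ₀ φ₁ t).deriv,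
    mul_gaussianPDFReal_sub_mul (by positivity) (by positivity), hweights,
    sq_div_sub_sq_div_sub_eq_mul hσ₀.ne' hσ₁.ne' hΔ.ne' hs,
    mul_nonneg_iff_of_pos_left (mul_pos (by positivity) (gaussianPDFReal_pos 0 1 _ one_ne_zero)),
    sub_nonneg, one_le_exp_iff, le_div_iff₀ (by positivity), zero_mul,
    mul_nonneg_iff_of_pos_left hΔ]

end Critical

theorem stmt_7_general (μ₀ μ₁ σ₀ σ₁ φ₀ φ₁ : ℝ)
    (hσ₀ : 0 < σ₀) (hσ : σ₀ < σ₁)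
    (hφ₀ : 0 < φ₀) (hφ₁ : 0 < φ₁)
    (hdisc : φ₀ / φ₁ ≥ (σ₀ / σ₁) * Real.exp (-(μ₀ - μ₁) ^ 2 / (2 * (σ₁ ^ 2 - σ₀ ^ 2))))
    (tplus : ℝ)
    (htplus : tplus = (μ₀ * σ₁ ^ 2 - μ₁ * σ₀ ^ 2
        + σ₀ * σ₁ * Real.sqrt ((μ₀ - μ₁) ^ 2
            + 2 * (σ₁ ^ 2 - σ₀ ^ 2) * Real.log (φ₀ * σ₁ / (φ₁ * σ₀))))
      / (σ₁ ^ 2 - σ₀ ^ 2))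
    (hcond : φ₀ / φ₁ >
        stdNormalCDF ((tplus - μ₁) / σ₁) / stdNormalCDF ((tplus - μ₀) / σ₀)) :
    (∀ t : ℝ,
        φ₀ * stdNormalCDF ((μ₀ - tplus) / σ₀) + φ₁ * stdNormalCDF ((tplus - μ₁) / σ₁)
          ≤ φ₀ * stdNormalCDF ((μ₀ - t) / σ₀) + φ₁ * stdNormalCDF ((t - μ₁) / σ₁)) ∧
    (φ₀ * stdNormalCDF ((μ₀ - tplus) / σ₀) + φ₁ * stdNormalCDF ((tplus - μ₁) / σ₁) ≤ φ₁) ∧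
    (φ₀ * stdNormalCDF ((μ₀ - tplus) / σ₀) + φ₁ * stdNormalCDF ((tplus - μ₁) / σ₁) ≤ φ₀) := by
  have hσ₁ : 0 < σ₁ := hσ₀.trans hσ
  set R := thresholdRisk μ₀ μ₁ σ₀ σ₁ φ₀ φ₁
  have hD := discriminant_nonneg hσ₀ hσ hφ₀ hφ₁ hdisc
  have htplus' : tplus = criticalPoint μ₀ μ₁ σ₀ σ₁ (√_) := htplus
  have hsign := deriv_thresholdRisk_nonneg_iff hσ₀ hσ hφ₀ hφ₁ (sq_sqrt hD)
  rw [← htplus'] at hsign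
  have hcrit : criticalPoint μ₀ μ₁ σ₀ σ₁ (-√_) ≤ tplus :=
    htplus' ▸ criticalPoint_neg_le hσ₀ hσ (sqrt_nonneg _)
  have hdiff : Differentiable ℝ R := fun t =>
    (hasDerivAt_thresholdRisk μ₀ μ₁ σ₀ σ₁ φ₀ φ₁ t).differentiableAt
  have hR₀ : R tplus ≤ φ₀ := by
    rw [gt_iff_lt, div_lt_div_iff₀ (stdNormalCDF_pos _) hφ₁] at hcond
    exact (thresholdRisk_le_iff μ₀ μ₁ σ₀ σ₁ φ₀ φ₁ tplus).2 (by linarith)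
  have hR₁ : R tplus ≤ φ₁ :=
    ge_of_tendsto (tendsto_thresholdRisk_atTop μ₀ μ₁ σ₀ σ₁ φ₀ φ₁ hσ₀ hσ₁)
    (eventually_atTop.2 ⟨tplus, fun t ht =>
      monotoneOn_Ici_of_deriv_sign hdiff hsign hcrit self_mem_Ici ht ht⟩)
  exact ⟨apply_le_of_deriv_sign hdiff hsign hcrit
    (tendsto_thresholdRisk_atBot μ₀ μ₁ σ₀ σ₁ φ₀ φ₁ hσ₀ hσ₁) hR₀, hR₁, hR₀⟩

/-- Let `0 < σ₀ < σ₁`, `μ₀ < μ₁`, priors `φ₀, φ₁ > 0` with `φ₀ + φ₁ = 1`, and assume the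
discriminant condition `φ₀/φ₁ ≥ (σ₀/σ₁)·exp(−(μ₀−μ₁)²/(2(σ₁²−σ₀²)))`. Let `t₊` be the
larger root of the first-order condition. If additionally
`φ₀/φ₁ > Φ((t₊−μ₁)/σ₁)/Φ((t₊−μ₀)/σ₀)`, then `t₊` is a global minimizer of
`R(t) = φ₀Φ((μ₀−t)/σ₀) + φ₁Φ((t−μ₁)/σ₁)` over `ℝ ∪ {±∞}`, where `R(−∞) = φ₁` and
`R(+∞) = φ₀`. -/
theorem stmt_7 (μ₀ μ₁ σ₀ σ₁ φ₀ φ₁ : ℝ)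
    (hσ₀ : 0 < σ₀) (hσ : σ₀ < σ₁) (hμ : μ₀ < μ₁)
    (hφ₀ : 0 < φ₀) (hφ₁ : 0 < φ₁) (hsum : φ₀ + φ₁ = 1)
    (hdisc : φ₀ / φ₁ ≥ (σ₀ / σ₁) * Real.exp (-(μ₀ - μ₁) ^ 2 / (2 * (σ₁ ^ 2 - σ₀ ^ 2))))
    (tplus : ℝ)
    (htplus : tplus = (μ₀ * σ₁ ^ 2 - μ₁ * σ₀ ^ 2
        + σ₀ * σ₁ * Real.sqrt ((μ₀ - μ₁) ^ 2
            + 2 * (σ₁ ^ 2 - σ₀ ^ 2) * Real.log (φ₀ * σ₁ / (φ₁ * σ₀))))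
      / (σ₁ ^ 2 - σ₀ ^ 2))
    (hcond : φ₀ / φ₁ >
        stdNormalCDF ((tplus - μ₁) / σ₁) / stdNormalCDF ((tplus - μ₀) / σ₀)) :
    (∀ t : ℝ,
        φ₀ * stdNormalCDF ((μ₀ - tplus) / σ₀) + φ₁ * stdNormalCDF ((tplus - μ₁) / σ₁)
          ≤ φ₀ * stdNormalCDF ((μ₀ - t) / σ₀) + φ₁ * stdNormalCDF ((t - μ₁) / σ₁)) ∧
    (φ₀ * stdNormalCDF ((μ₀ - tplus) / σ₀) + φ₁ * stdNormalCDF ((tplus - μ₁) / σ₁) ≤ φ₁) ∧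
    (φ₀ * stdNormalCDF ((μ₀ - tplus) / σ₀) + φ₁ * stdNormalCDF ((tplus - μ₁) / σ₁) ≤ φ₀) :=
  stmt_7_general μ₀ μ₁ σ₀ σ₁ φ₀ φ₁ hσ₀ hσ hφ₀ hφ₁ hdisc tplus htplus hcond
end

section
/- In the isotropic multivariate Gaussian setting, the minimax problem min over unit w and t ∈ ℝ of max{R₀(w,t), R₁(w,t)} equals min over t ∈ ℝ of max{R₀(μ/‖μ‖, t), R₁(μ/‖μ‖, t)}; i.e., the worst-class optimal hyperplane has normal direction μ/‖μ‖₂. -/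
/-!
Both class risks are increasing functions of `−wᵀμ`, so the worst-class risk at any threshold
only decreases when `wᵀμ` grows. By Cauchy–Schwarz `wᵀμ ≤ ‖μ‖` for unit `w`, with equality at
`w = μ/‖μ‖`; hence every value of the full minimax problem is dominated by a value along that
direction, and the two infima agree.
-/

open ProbabilityTheory Set

lemma stdNormalCDF_mono : Monotone stdNormalCDF := monotone_cdf _

noncomputable def worstClassRisk (σ₀ σ₁ t a : ℝ) : ℝ :=
  max (stdNormalCDF ((-t - a) / σ₀)) (stdNormalCDF ((t - a) / σ₁))

lemma worstClassRisk_antitone {σ₀ σ₁ : ℝ} (hσ₀ : 0 < σ₀) (hσ₁ : 0 < σ₁) (t : ℝ) :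
    Antitone (worstClassRisk σ₀ σ₁ t) := fun _ _ _ =>
  max_le_max (stdNormalCDF_mono (by gcongr)) (stdNormalCDF_mono (by gcongr))

section InnerProductSpace

variable {E : Type*} [NormedAddCommGroup E] [InnerProductSpace ℝ E]

lemma real_inner_le_norm_of_norm_eq_one {w : E} (hw : ‖w‖ = 1) (v : E) :
    inner ℝ w v ≤ ‖v‖ := by
  simpa [hw] using real_inner_le_norm w v

lemma real_inner_inv_norm_smul_self (v : E) : inner ℝ ((‖v‖⁻¹ : ℝ) • v) v = ‖v‖ := by
  rw [real_inner_smul_left, real_inner_self_eq_norm_sq]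
  rcases eq_or_ne ‖v‖ 0 with hv | hv
  · simp [hv]
  · field_simp

end InnerProductSpace

/-- In the isotropic multivariate Gaussian setting with class risks
`R₁(w,t) = Φ((t − wᵀμ)/σ₁)` and `R₀(w,t) = Φ((−t − wᵀμ)/σ₀)` over unit vectors `w`,
the minimax value `inf over unit w and t of max{R₀(w,t), R₁(w,t)}` equals
`inf over t of max{R₀(μ/‖μ‖,t), R₁(μ/‖μ‖,t)}`: the worst-class optimal hyperplane has
normal direction `μ/‖μ‖`. -/
theorem stmt_13 (d : ℕ) (μ : EuclideanSpace ℝ (Fin d)) (hμ : μ ≠ 0)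
    (σ₀ σ₁ : ℝ) (hσ₀ : 0 < σ₀) (hσ₁ : 0 < σ₁) :
    sInf {z : ℝ | ∃ (w : EuclideanSpace ℝ (Fin d)) (t : ℝ), ‖w‖ = 1 ∧
        z = max (stdNormalCDF ((-t - (inner ℝ w μ : ℝ)) / σ₀))
                (stdNormalCDF ((t - (inner ℝ w μ : ℝ)) / σ₁))}
    = sInf {z : ℝ | ∃ t : ℝ,
        z = max (stdNormalCDF ((-t - (inner ℝ ((‖μ‖⁻¹ : ℝ) • μ) μ : ℝ)) / σ₀))
                (stdNormalCDF ((t - (inner ℝ ((‖μ‖⁻¹ : ℝ) • μ) μ : ℝ)) / σ₁))} := by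
  apply csInf_eq_csInf_of_forall_exists_le
  · rintro _ ⟨w, t, hw, rfl⟩
    refine ⟨worstClassRisk σ₀ σ₁ t (inner ℝ ((‖μ‖⁻¹ : ℝ) • μ) μ), ⟨t, rfl⟩, ?_⟩
    rw [real_inner_inv_norm_smul_self]
    exact worstClassRisk_antitone hσ₀ hσ₁ t (real_inner_le_norm_of_norm_eq_one hw μ)
  · rintro _ ⟨t, rfl⟩
    exact ⟨_, ⟨_, t, norm_smul_inv_norm hμ, rfl⟩, le_rfl⟩
end

section
/- Let σ₀ < σ₁ and t̂ = (μ₀σ₁ + μ₁σ₀)/(σ₀ + σ₁), t₁ = the minimizer of (1/2)R₀(t) + (1/2)R₁(t) given by Equation with φ₀ = φ₁ (assuming it exists). Then t̂ < t₁; that is, the worst-class optimal threshold is strictly smaller than the balanced average-risk optimal threshold. -/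
/-- Let `0 < σ₀ < σ₁` and `μ₀ < μ₁`. With `t̂ = (μ₀σ₁ + μ₁σ₀)/(σ₀ + σ₁)` and
`t*(1) = (μ₀σ₁² − μ₁σ₀² + σ₀σ₁√((μ₀−μ₁)² + 2(σ₁²−σ₀²)log(σ₁/σ₀)))/(σ₁² − σ₀²)` (the
balanced average-risk optimal threshold for `φ₀ = φ₁`), we have `t̂ < t*(1)`. -/
theorem stmt_16 (μ₀ μ₁ σ₀ σ₁ : ℝ)
    (hσ₀ : 0 < σ₀) (hσ : σ₀ < σ₁) (hμ : μ₀ < μ₁) :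
    (μ₀ * σ₁ + μ₁ * σ₀) / (σ₀ + σ₁)
      < (μ₀ * σ₁ ^ 2 - μ₁ * σ₀ ^ 2
          + σ₀ * σ₁ * Real.sqrt ((μ₀ - μ₁) ^ 2
              + 2 * (σ₁ ^ 2 - σ₀ ^ 2) * Real.log (σ₁ / σ₀)))
        / (σ₁ ^ 2 - σ₀ ^ 2) := by
  have hσ₁ : 0 < σ₁ := hσ₀.trans hσ
  have hlog : 0 < Real.log (σ₁ / σ₀) := Real.log_pos (by rw [lt_div_iff₀ hσ₀]; linarith)
  have hs : μ₁ - μ₀ < Real.sqrt ((μ₀ - μ₁) ^ 2 + 2 * (σ₁ ^ 2 - σ₀ ^ 2) * Real.log (σ₁ / σ₀)) := by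
    rw [show ((μ₀ - μ₁)^2 : ℝ) = (μ₁ - μ₀)^2 by ring]
    rw [Real.lt_sqrt (by linarith)]
    nlinarith [mul_pos (show (0:ℝ) < σ₁ ^ 2 - σ₀ ^ 2 by nlinarith) hlog]
  rw [div_lt_div_iff₀ (by linarith) (by nlinarith)]
  nlinarith [mul_pos (mul_pos (mul_pos hσ₀ hσ₁) (show (0:ℝ) < σ₀ + σ₁ by linarith))
    (sub_pos.mpr hs)]
end

section
/- Under balanced priors φ₀ = φ₁ and σ₀ < σ₁, at the balanced average-risk minimizer t*(1) the class-1 risk strictly exceeds the class-0 risk: R₁(t*(1)) > R₀(t*(1)). -/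
/-!
The class-0 risk `Φ((μ₀ - t)/σ₀)` decreases and the class-1 risk `Φ((t - μ₁)/σ₁)` increases
in the threshold `t`, and the two agree at `t̂ = (μ₀σ₁ + μ₁σ₀)/(σ₀ + σ₁)`. So it suffices that
`t*(1) > t̂`, which after clearing the positive factor `σ₁² - σ₀²` reduces to
`μ₁ - μ₀ < √((μ₀ - μ₁)² + 2(σ₁² - σ₀²) log(σ₁/σ₀))`; this holds because `log(σ₁/σ₀) > 0`.
-/

open ProbabilityTheory MeasureTheory

theorem ProbabilityTheory.strictMono_cdf_of_absolutelyContinuous (μ : Measure ℝ)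
    [IsProbabilityMeasure μ] (hμ : volume ≪ μ) : StrictMono (cdf μ) := by
  intro x y hxy
  have hIoc : μ (Set.Ioc x y) ≠ 0 := fun h ↦
    hxy.not_ge (by simpa [Real.volume_Ioc] using hμ h)
  rwa [← measure_cdf μ, StieltjesFunction.measure_Ioc, ne_eq, ENNReal.ofReal_eq_zero,
    not_le, sub_pos] at hIoc

theorem stdNormalCDF_strictMono : StrictMono stdNormalCDF :=
  strictMono_cdf_of_absolutelyContinuous _ (gaussianReal_absolutelyContinuous' 0 one_ne_zero)

/-- The threshold `t̂` at which the two class risks coincide. -/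
noncomputable def equalRiskThreshold (μ₀ μ₁ σ₀ σ₁ : ℝ) : ℝ :=
  (μ₀ * σ₁ + μ₁ * σ₀) / (σ₀ + σ₁)

/-- The larger root `t*(1)` of the first-order condition of the balanced average risk. -/
noncomputable def balancedRiskMinimizer (μ₀ μ₁ σ₀ σ₁ : ℝ) : ℝ :=
  (μ₀ * σ₁ ^ 2 - μ₁ * σ₀ ^ 2
      + σ₀ * σ₁ * Real.sqrt ((μ₀ - μ₁) ^ 2 + 2 * (σ₁ ^ 2 - σ₀ ^ 2) * Real.log (σ₁ / σ₀)))
    / (σ₁ ^ 2 - σ₀ ^ 2)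

theorem div_lt_div_of_equalRiskThreshold_lt {μ₀ μ₁ σ₀ σ₁ t : ℝ} (hσ₀ : 0 < σ₀) (hσ₁ : 0 < σ₁)
    (ht : equalRiskThreshold μ₀ μ₁ σ₀ σ₁ < t) : (μ₀ - t) / σ₀ < (t - μ₁) / σ₁ := by
  rw [equalRiskThreshold, div_lt_iff₀ (by positivity)] at ht
  rw [div_lt_div_iff₀ hσ₀ hσ₁]
  linarith

theorem equalRiskThreshold_lt_balancedRiskMinimizer {μ₀ μ₁ σ₀ σ₁ : ℝ} (hσ₀ : 0 < σ₀)
    (hσ : σ₀ < σ₁) : equalRiskThreshold μ₀ μ₁ σ₀ σ₁ < balancedRiskMinimizer μ₀ μ₁ σ₀ σ₁ := by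
  have hσ₁ : 0 < σ₁ := hσ₀.trans hσ
  have hgap : 0 < σ₁ ^ 2 - σ₀ ^ 2 := by nlinarith
  have hlog : 0 < Real.log (σ₁ / σ₀) := Real.log_pos ((one_lt_div hσ₀).2 hσ)
  have hsqrt : μ₁ - μ₀ < Real.sqrt ((μ₀ - μ₁) ^ 2 + 2 * (σ₁ ^ 2 - σ₀ ^ 2) * Real.log (σ₁ / σ₀)) :=
    Real.lt_sqrt_of_sq_lt (by nlinarith [mul_pos hgap hlog])
  rw [equalRiskThreshold, balancedRiskMinimizer, div_lt_div_iff₀ (by positivity) hgap]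
  nlinarith [mul_pos (mul_pos hσ₀ hσ₁) (sub_pos.2 hsqrt)]

theorem stmt_17_general (μ₀ μ₁ σ₀ σ₁ tstar : ℝ)
    (hσ₀ : 0 < σ₀) (hσ : σ₀ < σ₁)
    (htstar : tstar = (μ₀ * σ₁ ^ 2 - μ₁ * σ₀ ^ 2
        + σ₀ * σ₁ * Real.sqrt ((μ₀ - μ₁) ^ 2
            + 2 * (σ₁ ^ 2 - σ₀ ^ 2) * Real.log (σ₁ / σ₀)))
      / (σ₁ ^ 2 - σ₀ ^ 2)) :
    stdNormalCDF ((μ₀ - tstar) / σ₀) < stdNormalCDF ((tstar - μ₁) / σ₁) := by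
  subst htstar
  exact stdNormalCDF_strictMono <| div_lt_div_of_equalRiskThreshold_lt hσ₀ (hσ₀.trans hσ)
    (equalRiskThreshold_lt_balancedRiskMinimizer hσ₀ hσ)

/-- Under balanced priors (`φ₀ = φ₁`) with `μ₀ < μ₁` and `0 < σ₀ < σ₁`, at the balanced
average-risk minimizer `t*(1)` the class-1 risk strictly exceeds the class-0 risk:
`R₁(t*(1)) > R₀(t*(1))`, where `R₀(t) = Φ((μ₀−t)/σ₀)` and `R₁(t) = Φ((t−μ₁)/σ₁)`. -/
theorem stmt_17 (μ₀ μ₁ σ₀ σ₁ tstar : ℝ)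
    (hσ₀ : 0 < σ₀) (hσ : σ₀ < σ₁) (hμ : μ₀ < μ₁)
    (htstar : tstar = (μ₀ * σ₁ ^ 2 - μ₁ * σ₀ ^ 2
        + σ₀ * σ₁ * Real.sqrt ((μ₀ - μ₁) ^ 2
            + 2 * (σ₁ ^ 2 - σ₀ ^ 2) * Real.log (σ₁ / σ₀)))
      / (σ₁ ^ 2 - σ₀ ^ 2)) :
    stdNormalCDF ((μ₀ - tstar) / σ₀) < stdNormalCDF ((tstar - μ₁) / σ₁) :=
  stmt_17_general μ₀ μ₁ σ₀ σ₁ tstar hσ₀ hσ htstar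
end
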